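/- For all t ≥ 0 and all a, b, c ≥ 0, the polynomial e_t^D := s₁ + (t²-1)s₂ - 2(t+1)²s₃ is nonnegative, where s₁ = T_{4,1} - 2U·S_{1,1}, s₂ = T_{3,2} - 2U·S_{1,1}, s₃ = U·S₂ - U·S_{1,1}, since e_t^D(a,b,c) = a(b-c)²((t+1)a-b-c)² + b(c-a)²((t+1)b-c-a)² + c(a-b)²((t+1)c-a-b)². -/
import Mathlib

/-- Quintic symmetric basis forms in three variables. -/
def s0 (a b c : ℝ) : ℝ := (a^5 + b^5 + c^5) - a*b*c*(a*b + b*c + c*a)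
def s1 (a b c : ℝ) : ℝ :=
  (a^4*b + a*b^4 + b^4*c + b*c^4 + c^4*a + c*a^4) - 2*a*b*c*(a*b + b*c + c*a)
def s2 (a b c : ℝ) : ℝ :=
  (a^3*b^2 + a^2*b^3 + b^3*c^2 + b^2*c^3 + c^3*a^2 + c^2*a^3) - 2*a*b*c*(a*b + b*c + c*a)
def s3 (a b c : ℝ) : ℝ := a*b*c*(a^2 + b^2 + c^2) - a*b*c*(a*b + b*c + c*a)
def s4 (a b c : ℝ) : ℝ := a*b*c*(a*b + b*c + c*a)

/-- The extremal quintic `e_t^D = s₁ + (t²-1)s₂ - 2(t+1)²s₃`. -/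
def eD (t a b c : ℝ) : ℝ := s1 a b c + (t^2 - 1) * s2 a b c - 2*(t+1)^2 * s3 a b c

theorem eD_nonneg (t : ℝ) (ht : 0 ≤ t) (a b c : ℝ) (ha : 0 ≤ a) (hb : 0 ≤ b) (hc : 0 ≤ c) :
    eD t a b c = a*(b-c)^2*((t+1)*a - b - c)^2 + b*(c-a)^2*((t+1)*b - c - a)^2
        + c*(a-b)^2*((t+1)*c - a - b)^2 ∧
    0 ≤ eD t a b c := by
  have h : eD t a b c = a*(b-c)^2*((t+1)*a - b - c)^2 + b*(c-a)^2*((t+1)*b - c - a)^2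
      + c*(a-b)^2*((t+1)*c - a - b)^2 := by
    unfold eD s1 s2 s3; ring
  exact ⟨h, h ▸ by positivity⟩
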